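/- arXiv:math/0702452 — 2 statements merged into one kernel-verified Lean document; each statement's English description precedes it below -/
import Mathlib

section
/- Let c_i(r,n,k) be the number of colored permutations π ∈ G_{r,n} with exc_A(π) = k and csum(π) = i. Then c_i(r,n,k) = (n−k)·c_i(r,n−1,k−1) + (k+1)·c_i(r,n−1,k) + Σ_{j=1}^{r−1} [(n−k)·c_{i−j}(r,n−1,k) + (k+1)·c_{i−j}(r,n−1,k+1)], with c_{−m}(r,n,k) = 0 for m ≥ 1 and c_i(r,0,k) = 0. -/
open Finset Polynomial

/-- The group of colored permutations `G_{r,n} = Z_r ≀ S_n`, realized as bijections of the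
colored alphabet `Σ = [n] × {0,…,r-1}` commuting with the color shift. -/
def ColoredPerm (r n : ℕ) [NeZero r] : Type :=
  {π : Equiv.Perm (Fin n × Fin r) //
    ∀ x : Fin n × Fin r, π (x.1, x.2 + 1) = ((π x).1, (π x).2 + 1)}

/-- The color order on the colored alphabet:
`1^[r-1] < ⋯ < n^[r-1] < ⋯ < 1^[0] < ⋯ < n^[0]` (higher color is smaller). -/
def colorLt {r n : ℕ} (x y : Fin n × Fin r) : Prop :=
  y.2 < x.2 ∨ (x.2 = y.2 ∧ x.1 < y.1)

/-- The excedance number `exc` of a colored permutation. -/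
noncomputable def cExc {r n : ℕ} [NeZero r] (π : ColoredPerm r n) : ℕ :=
  Nat.card {x : Fin n × Fin r // colorLt x (π.1 x)}

/-- `exc_A(π) = |{i ∈ [n-1] : π(i) > i}|` (positions are the color-0 letters,
and `i ∈ [n-1]` corresponds to `i.val + 1 < n`). -/
noncomputable def cExcA {r n : ℕ} [NeZero r] (π : ColoredPerm r n) : ℕ :=
  Nat.card {i : Fin n // i.val + 1 < n ∧ colorLt (i, 0) (π.1 (i, 0))}

/-- `csum(π)`: the sum of the colors appearing in the window notation of `π`. -/
def csum {r n : ℕ} [NeZero r] (π : ColoredPerm r n) : ℕ :=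
  ∑ i : Fin n, (π.1 (i, 0)).2.val

/-- `c_i(r,n,k)`: the number of colored permutations `π ∈ G_{r,n}` with `exc_A(π) = k` and
`csum(π) = i`.  Indices `i, k` range over `ℤ`, so counts vanish for negative indices
(in particular `c_{−m}(r,n,k) = 0` for `m ≥ 1`). -/
noncomputable def cG (r n : ℕ) [NeZero r] (i k : ℤ) : ℕ :=
  Nat.card {π : ColoredPerm r n // (cExcA π : ℤ) = k ∧ (csum π : ℤ) = i}

/-! A colored permutation is determined by its window: a coloring `c` of the positions and an
underlying permutation `σ`, with `π (q, t) = (σ q, t + c q)`. Every window of length `m + 1`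
arises exactly once from a window of length `m`, a color `j` and a position `p`, by placing the
new largest letter, colored `j`, at position `p` and moving the old letter at `p` to the end.
This adds `j` to `csum`, and changes `exc_A` only at position `p`: an excedance is created
there iff `j = 0` and `p` is not the last position, and one is destroyed iff `p` was an
excedance. Counting positions of each kind gives the coefficients `k + 1` and `n - k`. -/

namespace ColoredPerm

variable {r n : ℕ} [NeZero r]

open Fin.NatCast in
lemma apply_eq (π : ColoredPerm r n) (a : Fin n × Fin r) :
    π.1 a = ((π.1 (a.1, 0)).1, a.2 + (π.1 (a.1, 0)).2) := by
  suffices h : ∀ t : ℕ,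
      π.1 (a.1, (t : Fin r)) = ((π.1 (a.1, 0)).1, (t : Fin r) + (π.1 (a.1, 0)).2) by
    simpa using h a.2
  intro t
  induction t with
  | zero => simp
  | succ t ih => rw [Nat.cast_succ, π.2 (a.1, t), ih, add_right_comm]

end ColoredPerm

namespace Equiv.Perm

variable {m : ℕ}

def extendLast (σ : Perm (Fin m)) : Perm (Fin (m + 1)) :=
  finSuccEquivLast.symm.permCongr σ.optionCongr

@[simp] lemma extendLast_castSucc (σ : Perm (Fin m)) (t : Fin m) :
    σ.extendLast t.castSucc = (σ t).castSucc := by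
  simp [extendLast, permCongr_apply]

@[simp] lemma extendLast_last (σ : Perm (Fin m)) : σ.extendLast (Fin.last m) = Fin.last m := by
  simp [extendLast, permCongr_apply]

lemma extendLast_injective : Function.Injective (extendLast (m := m)) := fun σ τ h =>
  Equiv.ext fun t => Fin.castSucc_injective _ <| by
    rw [← extendLast_castSucc, ← extendLast_castSucc, h]

end Equiv.Perm

lemma Finset.card_filter_ite_mem_eq {α : Type*} [Fintype α] [DecidableEq α] (T : Finset α)
    (u v k : ℤ) :
    (#{a | (if a ∈ T then u else v) = k} : ℤ) =
      (if u = k then (#T : ℤ) else 0) + (if v = k then (Fintype.card α : ℤ) - #T else 0) := by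
  have hT : #T ≤ Fintype.card α := card_le_univ T
  by_cases hu : u = k <;> by_cases hv : v = k <;>
    simp [hu, hv, apply_ite (· = k), filter_not, card_univ_sdiff, Nat.cast_sub hT]

lemma Fin.sum_ite_eq_zero_eq_add_sum_Icc {M : Type*} [AddCommMonoid M] {r : ℕ} [NeZero r]
    (a : M) (f : ℕ → M) :
    ∑ j : Fin r, (if j = 0 then a else f j) = a + ∑ j ∈ Icc 1 (r - 1), f j := by
  have hr : r ≠ 0 := NeZero.ne r
  have hrange : range r = insert 0 (Icc 1 (r - 1)) := by
    ext j; simp only [mem_range, mem_insert, mem_Icc]; omega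
  simp only [← Fin.val_eq_zero_iff]
  rw [Fin.sum_univ_eq_sum_range (fun j => if j = 0 then a else f j), hrange,
    sum_insert (by simp), if_pos rfl]
  congr 1
  exact sum_congr rfl fun j hj => if_neg (by simp only [mem_Icc] at hj; omega)

abbrev ColorsAndPerm (r n : ℕ) : Type := (Fin n → Fin r) × Equiv.Perm (Fin n)

namespace ColorsAndPerm

section Window

variable {r n : ℕ}

def colorSum (x : ColorsAndPerm r n) : ℕ := ∑ q, (x.1 q).val

variable [NeZero r]

def excSet (x : ColorsAndPerm r n) : Finset (Fin n) := {q | x.1 q = 0 ∧ q < x.2 q}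

@[simp] lemma mem_excSet {x : ColorsAndPerm r n} {q : Fin n} :
    q ∈ x.excSet ↔ x.1 q = 0 ∧ q < x.2 q := by
  simp [excSet]

def exc (x : ColorsAndPerm r n) : ℕ := #x.excSet

def toColoredPerm (x : ColorsAndPerm r n) : ColoredPerm r n :=
  ⟨{ toFun := fun a => (x.2 a.1, a.2 + x.1 a.1)
     invFun := fun a => (x.2.symm a.1, a.2 - x.1 (x.2.symm a.1))
     left_inv := fun a => by simp
     right_inv := fun a => by simp },
   fun a => by simp [add_right_comm]⟩

lemma toColoredPerm_apply (x : ColorsAndPerm r n) (a : Fin n × Fin r) :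
    (toColoredPerm x).1 a = (x.2 a.1, a.2 + x.1 a.1) := rfl

lemma toColoredPerm_injective : Function.Injective (toColoredPerm (r := r) (n := n)) := by
  intro x y h
  have h0 (q : Fin n) : (x.2 q, x.1 q) = (y.2 q, y.1 q) := by
    simpa [toColoredPerm_apply] using congrArg (fun π : ColoredPerm r n => π.1 (q, 0)) h
  exact Prod.ext (funext fun q => (Prod.ext_iff.1 (h0 q)).2)
    (Equiv.ext fun q => (Prod.ext_iff.1 (h0 q)).1)

lemma toColoredPerm_surjective : Function.Surjective (toColoredPerm (r := r) (n := n)) := by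
  intro π
  let c : Fin n → Fin r := fun q => (π.1 (q, 0)).2
  let σ : Fin n → Fin n := fun q => (π.1 (q, 0)).1
  have hσ : Function.Injective σ := by
    intro a b hab
    have : π.1 (a, 0) = π.1 (b, c a - c b) := by
      rw [π.apply_eq (b, _)]
      exact Prod.ext hab (by simp [c])
    exact congrArg Prod.fst (π.1.injective this)
  refine ⟨(c, Equiv.ofBijective σ hσ.bijective_of_finite),
    Subtype.ext (Equiv.ext fun a => ?_)⟩
  rw [toColoredPerm_apply, π.apply_eq a]
  rfl

lemma toColoredPerm_bijective : Function.Bijective (toColoredPerm (r := r) (n := n)) :=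
  ⟨toColoredPerm_injective, toColoredPerm_surjective⟩

lemma cExcA_toColoredPerm (x : ColorsAndPerm r n) : cExcA (toColoredPerm x) = x.exc := by
  have h (q : Fin n) : (q.val + 1 < n ∧ colorLt (q, 0) ((toColoredPerm x).1 (q, 0))) ↔
      q ∈ x.excSet := by
    have := (x.2 q).isLt
    simp only [toColoredPerm_apply, colorLt, zero_add, mem_excSet, Fin.lt_def]
    constructor
    · rintro ⟨-, h | ⟨h1, h2⟩⟩
      · exact absurd h (Nat.not_lt_zero _)
      · exact ⟨h1.symm, h2⟩
    · rintro ⟨h1, h2⟩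
      exact ⟨by omega, Or.inr ⟨h1.symm, h2⟩⟩
  rw [cExcA, Nat.card_congr (Equiv.subtypeEquivRight h), Nat.card_eq_fintype_card,
    Fintype.card_coe, exc]

lemma csum_toColoredPerm (x : ColorsAndPerm r n) : csum (toColoredPerm x) = x.colorSum := by
  simp [csum, colorSum, toColoredPerm_apply]

lemma sum_ite_eq_mul_cG (i k a : ℤ) :
    ∑ x : ColorsAndPerm r n, (if (x.exc : ℤ) = k ∧ (x.colorSum : ℤ) = i then a else 0) =
      a * cG r n i k := by
  have hcard :
      cG r n i k = #{x : ColorsAndPerm r n | (x.exc : ℤ) = k ∧ (x.colorSum : ℤ) = i} := by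
    rw [cG, ← Nat.card_congr ((Equiv.ofBijective _ toColoredPerm_bijective).subtypeEquiv
      fun x => by rw [Equiv.ofBijective_apply, cExcA_toColoredPerm, csum_toColoredPerm]),
      Nat.card_eq_fintype_card, Fintype.card_subtype]
  rw [← sum_filter, sum_const, hcard, nsmul_eq_mul, mul_comm]

end Window

section Extension

open Equiv

variable {r m : ℕ}

def extend (j : Fin r) (x : ColorsAndPerm r m) (p : Fin (m + 1)) : ColorsAndPerm r (m + 1) :=
  (Fin.snoc x.1 j ∘ swap p (Fin.last m), x.2.extendLast * swap p (Fin.last m))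

lemma extend_injective :
    Function.Injective fun y : Fin r × ColorsAndPerm r m × Fin (m + 1) =>
      extend y.1 y.2.1 y.2.2 := by
  rintro ⟨j, ⟨c, σ⟩, p⟩ ⟨j', ⟨c', σ'⟩, p'⟩ h
  obtain ⟨hc, hσ⟩ := Prod.ext_iff.1 h
  dsimp only [extend] at hc hσ
  obtain rfl : p = p' := by
    have : σ'.extendLast (swap p' (Fin.last m) p) = σ'.extendLast (Fin.last m) := by
      simpa using (Perm.ext_iff.1 hσ p).symm
    simpa [swap_apply_eq_iff] using σ'.extendLast.injective this
  obtain rfl : σ = σ' := Perm.extendLast_injective (mul_right_cancel hσ)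
  have hsnoc : (Fin.snoc c j : Fin (m + 1) → Fin r) = Fin.snoc c' j' := by
    funext q
    simpa using congrFun hc (swap p (Fin.last m) q)
  obtain ⟨rfl, rfl⟩ := Fin.snoc_injective2 hsnoc
  rfl

lemma extend_bijective :
    Function.Bijective fun y : Fin r × ColorsAndPerm r m × Fin (m + 1) =>
      extend y.1 y.2.1 y.2.2 := by
  rw [Fintype.bijective_iff_injective_and_card]
  refine ⟨extend_injective, ?_⟩
  simp only [Fintype.card_prod, Fintype.card_perm, Fintype.card_fun, Fintype.card_fin,
    pow_succ, Nat.factorial_succ]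
  ring

lemma colorSum_extend (j : Fin r) (x : ColorsAndPerm r m) (p : Fin (m + 1)) :
    (extend j x p).colorSum = j + x.colorSum := by
  dsimp only [colorSum, extend, Function.comp_apply]
  rw [Equiv.sum_comp (swap p (Fin.last m)) fun q => (Fin.snoc (α := fun _ => Fin r) x.1 j q).val,
    Fin.sum_univ_castSucc]
  simp [add_comm]

variable [NeZero r]

lemma mem_excSet_extend_self (j : Fin r) (x : ColorsAndPerm r m) (p : Fin (m + 1)) :
    p ∈ (extend j x p).excSet ↔ j = 0 ∧ p ≠ Fin.last m := by
  simp [extend, Fin.lt_last_iff_ne_last]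

lemma mem_excSet_extend_of_ne (j : Fin r) (x : ColorsAndPerm r m) {p q : Fin (m + 1)}
    (hq : q ≠ p) : q ∈ (extend j x p).excSet ↔ q ∈ x.excSet.map Fin.castSuccEmb := by
  induction q using Fin.lastCases with
  | last =>
    obtain ⟨t, rfl⟩ := Fin.exists_castSucc_eq.2 hq.symm
    simp [extend, (Fin.castSucc_lt_last _).not_gt]
  | cast t =>
    simp [extend, swap_apply_of_ne_of_ne hq (Fin.castSucc_lt_last t).ne]

lemma excSet_extend (j : Fin r) (x : ColorsAndPerm r m) (p : Fin (m + 1)) :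
    (extend j x p).excSet =
      if j = 0 ∧ p ≠ Fin.last m then insert p (x.excSet.map Fin.castSuccEmb)
      else (x.excSet.map Fin.castSuccEmb).erase p := by
  ext q
  by_cases hq : q = p
  · subst hq
    rw [mem_excSet_extend_self]
    split_ifs with h <;> simp [h]
  · rw [mem_excSet_extend_of_ne j x hq]
    split_ifs <;> simp [hq]

lemma exc_extend (j : Fin r) (x : ColorsAndPerm r m) (p : Fin (m + 1)) :
    ((extend j x p).exc : ℤ) =
      if j = 0 then
        if p ∈ insert (Fin.last m) (x.excSet.map Fin.castSuccEmb) then (x.exc : ℤ)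
        else x.exc + 1
      else if p ∈ x.excSet.map Fin.castSuccEmb then (x.exc : ℤ) - 1 else x.exc := by
  have hlast : Fin.last m ∉ x.excSet.map Fin.castSuccEmb := by simp [Fin.castSucc_ne_last]
  rw [exc, excSet_extend]
  by_cases hj : j = 0
  · by_cases hp : p = Fin.last m
    · subst hp; simp [hj, hlast, exc]
    · simp [hj, hp, card_insert_eq_ite, exc]
  · rw [if_neg (fun h => hj h.1), card_erase_eq_ite, card_map, exc]
    simp only [hj, if_false]
    split_ifs with hp
    · obtain ⟨t, ht, -⟩ := mem_map.1 hp
      exact Nat.cast_pred (card_pos.2 ⟨t, ht⟩)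
    · rfl

lemma card_exc_extend_eq (j : Fin r) (x : ColorsAndPerm r m) (k : ℤ) :
    (#{p | ((extend j x p).exc : ℤ) = k} : ℤ) =
      if j = 0 then
        (if (x.exc : ℤ) = k then k + 1 else 0) + (if (x.exc : ℤ) = k - 1 then m + 1 - k else 0)
      else
        (if (x.exc : ℤ) = k then m + 1 - k else 0) +
          (if (x.exc : ℤ) = k + 1 then k + 1 else 0) := by
  have hlast : Fin.last m ∉ x.excSet.map Fin.castSuccEmb := by simp [Fin.castSucc_ne_last]
  by_cases hj : j = 0
  all_goals
    simp only [exc_extend, hj, if_true, if_false]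
    rw [Finset.card_filter_ite_mem_eq]
    simp only [card_insert_of_notMem hlast, card_map, Fintype.card_fin, exc]
    split_ifs <;> push_cast <;> omega

lemma sum_ite_extend (j : Fin r) (x : ColorsAndPerm r m) (i k : ℤ) :
    ∑ p, (if ((extend j x p).exc : ℤ) = k ∧
        ((extend j x p).colorSum : ℤ) = i then 1 else 0) =
      if j = 0 then
        (if (x.exc : ℤ) = k ∧ (x.colorSum : ℤ) = i then k + 1 else 0) +
          (if (x.exc : ℤ) = k - 1 ∧ (x.colorSum : ℤ) = i then m + 1 - k else 0)
      else
        (if (x.exc : ℤ) = k ∧ (x.colorSum : ℤ) = i - (j : ℕ) then m + 1 - k else 0) +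
          (if (x.exc : ℤ) = k + 1 ∧ (x.colorSum : ℤ) = i - (j : ℕ) then k + 1 else 0) := by
  have hsum (p : Fin (m + 1)) :
      ((extend j x p).colorSum : ℤ) = i ↔ (x.colorSum : ℤ) = i - (j : ℕ) := by
    rw [colorSum_extend]; push_cast; omega
  simp only [hsum]
  by_cases hj : j = 0
  · subst hj
    by_cases hC : (x.colorSum : ℤ) = i <;> simp [hC, sum_boole, card_exc_extend_eq]
  · by_cases hC : (x.colorSum : ℤ) = i - (j : ℕ) <;>
      simp [hj, hC, sum_boole, card_exc_extend_eq]

lemma sum_sum_ite_extend (j : Fin r) (i k : ℤ) :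
    ∑ y : ColorsAndPerm r m × Fin (m + 1), (if ((extend j y.1 y.2).exc : ℤ) = k ∧
        ((extend j y.1 y.2).colorSum : ℤ) = i then 1 else 0) =
      if j = 0 then (k + 1) * cG r m i k + (m + 1 - k) * cG r m i (k - 1)
      else (m + 1 - k) * cG r m (i - (j : ℕ)) k + (k + 1) * cG r m (i - (j : ℕ)) (k + 1) := by
  rw [Fintype.sum_prod_type]
  simp only [sum_ite_extend]
  by_cases hj : j = 0 <;> simp only [hj, if_true, if_false, sum_add_distrib, sum_ite_eq_mul_cG]

end Extension

end ColorsAndPerm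

/-- The recursion
`c_i(r,n,k) = (n−k)·c_i(r,n−1,k−1) + (k+1)·c_i(r,n−1,k)
  + Σ_{j=1}^{r−1} [(n−k)·c_{i−j}(r,n−1,k) + (k+1)·c_{i−j}(r,n−1,k+1)]`. -/
theorem cG_recursion (r n : ℕ) [NeZero r] (hn : 1 ≤ n) (i k : ℤ) :
    (cG r n i k : ℤ) =
      ((n : ℤ) - k) * cG r (n - 1) i (k - 1) + (k + 1) * cG r (n - 1) i k +
        ∑ j ∈ Finset.Icc 1 (r - 1),
          (((n : ℤ) - k) * cG r (n - 1) (i - (j : ℤ)) k +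
            (k + 1) * cG r (n - 1) (i - (j : ℤ)) (k + 1)) := by
  obtain ⟨m, rfl⟩ : ∃ m, n = m + 1 := ⟨n - 1, by omega⟩
  rw [Nat.add_sub_cancel, ← one_mul (cG r (m + 1) i k : ℤ), ← ColorsAndPerm.sum_ite_eq_mul_cG,
    ← ColorsAndPerm.extend_bijective.sum_comp, Fintype.sum_prod_type]
  simp only [ColorsAndPerm.sum_sum_ite_extend]
  rw [Fin.sum_ite_eq_zero_eq_add_sum_Icc _
    fun j : ℕ => ((m + 1 : ℤ) - k) * cG r m (i - j) k + (k + 1) * cG r m (i - j) (k + 1)]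
  push_cast
  ring
end

section
/- The generating function of the excedance number on G_{r,n} is symmetric: writing Σ_{π ∈ G_{r,n}} q^{exc(π)} = Σ_{i=0}^{rn−1} a_i q^i, one has a_i = a_{rn−1−i} for all 0 ≤ i ≤ rn−1. -/
open Finset Polynomial

/-! A colored permutation is a pair `(σ, c)` with `σ ∈ S_n` and colors `c : [n] → ℤ/r`, acting by
`(i, α) ↦ (σ i, c i + α)`. The orbit of `i` contributes `c i` excedances, or `r` when `c i = 0`
and `i < σ i`; after shifting `c i` by one at the excedances of `σ` it contributes
`[i < σ i] + d i` for an arbitrary `d : [n] → {0, …, r - 1}`. So the generating function factors as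
`A_n(q) · (1 + q + ⋯ + q^(r-1))^n`, with `A_n` the excedance (Eulerian) polynomial of `S_n`. The
second factor is palindromic via `d ↦ r - 1 - d`. The first is palindromic of degree `n - 1` by
induction: the `n + 1` ways of prefixing a new letter to `σ ∈ S_n` with `k` excedances contribute
`(k + 1) q^k + (n - k) q^(k+1)`, which reflection in degree `n` carries to the contribution of
`n - 1 - k`.
The product is then palindromic of degree `rn - 1`. -/

noncomputable def genFun {α : Type*} [Fintype α] (f : α → ℕ) : ℕ[X] :=
  ∑ a, X ^ f a

section genFun

variable {α β : Type*} [Fintype α] [Fintype β]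

theorem coeff_genFun (f : α → ℕ) (k : ℕ) : (genFun f).coeff k = Nat.card {a // f a = k} := by
  classical
  simp [genFun, coeff_X_pow, Nat.card_eq_fintype_card, Fintype.card_subtype, eq_comm]

theorem genFun_comp_equiv (e : β ≃ α) (f : α → ℕ) : genFun (fun b => f (e b)) = genFun f :=
  e.sum_comp fun a => X ^ f a

theorem genFun_add_prod (f : α → ℕ) (g : β → ℕ) :
    genFun (fun p : α × β => f p.1 + g p.2) = genFun f * genFun g := by
  simp only [genFun, pow_add, Fintype.sum_prod_type, Finset.sum_mul_sum]

theorem natDegree_genFun_le {f : α → ℕ} {N : ℕ} (hf : ∀ a, f a ≤ N) :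
    (genFun f).natDegree ≤ N :=
  natDegree_sum_le_of_forall_le _ _ fun a _ => (natDegree_X_pow_le _).trans (hf a)

theorem Polynomial.reflect_sum {R ι : Type*} [Semiring R] (s : Finset ι) (p : ι → R[X]) (N : ℕ) :
    reflect N (∑ i ∈ s, p i) = ∑ i ∈ s, reflect N (p i) :=
  map_sum (⟨⟨reflect N, reflect_zero⟩, fun p q => reflect_add p q N⟩ : R[X] →+ R[X]) p s

theorem reflect_genFun {f : α → ℕ} {N : ℕ} (hf : ∀ a, f a ≤ N) :
    reflect N (genFun f) = genFun fun a => N - f a := by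
  simp only [genFun, reflect_sum, reflect_monomial, revAt_le (hf _)]

theorem reflect_genFun_of_equiv {f : α → ℕ} {N : ℕ} (τ : α ≃ α) (hτ : ∀ a, f (τ a) + f a = N) :
    reflect N (genFun f) = genFun f := by
  rw [reflect_genFun fun a => (hτ a).symm ▸ Nat.le_add_left _ _, ← genFun_comp_equiv τ f]
  congr with a
  have := hτ a
  omega

theorem sum_comp_eq_of_genFun_eq {M : Type*} [AddCommMonoid M] {f : α → ℕ} {g : β → ℕ}
    (h : genFun f = genFun g) (φ : ℕ → M) : ∑ a, φ (f a) = ∑ b, φ (g b) := by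
  classical
  have hmap : univ.val.map f = univ.val.map g := by
    ext k
    have hk := congrArg (coeff · k) h
    simp only [coeff_genFun, Nat.card_eq_fintype_card, Fintype.card_subtype] at hk
    simpa [Multiset.count_map, eq_comm, Finset.card, Finset.filter_val] using hk
  have := congrArg (fun m => (m.map φ).sum) hmap
  simpa only [Multiset.map_map, Function.comp_def, ← Finset.sum_eq_multiset_sum] using this

end genFun

section Eulerian

open Equiv Equiv.Perm

def permExc {n : ℕ} (σ : Perm (Fin n)) : ℕ := #{i | i < σ i}

variable {n : ℕ}

theorem permExc_le (σ : Perm (Fin (n + 1))) : permExc σ ≤ n := by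
  calc permExc σ ≤ #{i : Fin (n + 1) | (i : ℕ) < n} := by
        refine card_le_card fun i => ?_
        simp only [mem_filter, mem_univ, true_and, Fin.lt_def]
        have := (σ i).isLt
        omega
    _ = n := by rw [Fin.card_filter_val_lt]; omega

theorem permExc_decomposeFin_symm_zero (e : Perm (Fin n)) :
    permExc (decomposeFin.symm (0, e)) = permExc e := by
  simp [permExc, Fin.card_filter_univ_succ', decomposeFin_symm_apply_succ]

theorem permExc_decomposeFin_symm_succ (e : Perm (Fin n)) (q : Fin n) :
    permExc (decomposeFin.symm (q.succ, e)) =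
      if e.symm q < q then permExc e else permExc e + 1 := by
  have hsucc : ∀ i, i.succ < swap 0 q.succ (e i).succ ↔ i < e i ∧ i ≠ e.symm q := by
    intro i
    by_cases hi : e i = q
    · subst hi
      simp
    · rw [swap_apply_of_ne_of_ne (Fin.succ_ne_zero _) (by simpa using hi)]
      simp [Fin.succ_lt_succ_iff, Equiv.eq_symm_apply, hi]
  rw [permExc, Fin.card_filter_univ_succ', decomposeFin_symm_apply_zero, if_pos q.succ_pos]
  simp only [decomposeFin_symm_apply_succ, hsucc]
  rw [← filter_filter, filter_ne', card_erase_eq_ite, ← permExc]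
  simp only [mem_filter, mem_univ, true_and, apply_symm_apply]
  split_ifs with h
  · have : 0 < permExc e := card_pos.mpr ⟨e.symm q, by simpa using h⟩
    omega
  · exact add_comm _ _

noncomputable def insertionPoly (n k : ℕ) : ℕ[X] := C (k + 1) * X ^ k + C (n - k) * X ^ (k + 1)

theorem sum_X_pow_permExc_decomposeFin_symm (e : Perm (Fin n)) :
    ∑ p, X ^ permExc (decomposeFin.symm (p, e)) = insertionPoly n (permExc e) := by
  have hdesc : #{q | e.symm q < q} = permExc e := card_equiv e.symm (by simp)
  have hasc : #{q | ¬ e.symm q < q} = n - permExc e := by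
    have := card_filter_add_card_filter_not (s := univ) fun q => e.symm q < q
    rw [card_univ, Fintype.card_fin, hdesc] at this
    omega
  have hC (m : ℕ) : (C m : ℕ[X]) = m := by simp
  rw [Fin.sum_univ_succ, permExc_decomposeFin_symm_zero]
  simp only [permExc_decomposeFin_symm_succ, apply_ite (X ^ ·), sum_ite, sum_const, hdesc, hasc,
    insertionPoly, nsmul_eq_mul, hC, Nat.cast_add, Nat.cast_one]
  ring

theorem genFun_permExc_succ :
    genFun (permExc : Perm (Fin (n + 1)) → ℕ) = ∑ e : Perm (Fin n), insertionPoly n (permExc e) := by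
  rw [← genFun_comp_equiv decomposeFin.symm, genFun, Fintype.sum_prod_type_right]
  simp only [sum_X_pow_permExc_decomposeFin_symm]

theorem reflect_insertionPoly {k : ℕ} (hk : k ≤ n) :
    reflect (n + 1) (insertionPoly (n + 1) k) = insertionPoly (n + 1) (n - k) := by
  rw [insertionPoly, insertionPoly, reflect_add, reflect_C_mul_X_pow, reflect_C_mul_X_pow,
    revAt_le (by omega), revAt_le (by omega), add_comm]
  congr 3 <;> omega

theorem reflect_genFun_permExc :
    reflect n (genFun (permExc : Perm (Fin (n + 1)) → ℕ)) =
      genFun (permExc : Perm (Fin (n + 1)) → ℕ) := by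
  induction n with
  | zero => exact reflect_genFun_of_equiv (Equiv.refl _) fun σ => by simpa using permExc_le σ
  | succ n ih =>
    have hsymm : genFun (fun e : Perm (Fin (n + 1)) => n - permExc e) =
        genFun (permExc : Perm (Fin (n + 1)) → ℕ) := by
      rw [← reflect_genFun permExc_le, ih]
    rw [genFun_permExc_succ, reflect_sum,
      sum_congr rfl fun e _ => reflect_insertionPoly (permExc_le e)]
    exact sum_comp_eq_of_genFun_eq hsymm (insertionPoly (n + 1))

end Eulerian

section ColorSum

variable {r n : ℕ}

def colorSum (d : Fin n → Fin r) : ℕ := ∑ i, (d i : ℕ)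

theorem colorSum_rev_add (d : Fin n → Fin r) :
    colorSum (fun i => (d i).rev) + colorSum d = (r - 1) * n := by
  rw [colorSum, colorSum, ← sum_add_distrib]
  calc ∑ i, ((d i).rev + d i : ℕ) = ∑ _i : Fin n, (r - 1) :=
        sum_congr rfl fun i _ => by rw [Fin.val_rev]; have := (d i).isLt; omega
    _ = (r - 1) * n := by simp [mul_comm]

theorem reflect_genFun_colorSum :
    reflect ((r - 1) * n) (genFun (colorSum : (Fin n → Fin r) → ℕ)) =
      genFun (colorSum : (Fin n → Fin r) → ℕ) :=
  reflect_genFun_of_equiv (Equiv.piCongrRight fun _ => Fin.revPerm) colorSum_rev_add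

end ColorSum

theorem Fin.card_filter_le_add_val {r m : ℕ} (hm : m ≤ r) : #{α : Fin r | r ≤ m + α} = m := by
  have h := card_filter_add_card_filter_not (s := univ) fun α : Fin r => (α : ℕ) < r - m
  rw [Fin.card_filter_val_lt, card_univ, Fintype.card_fin] at h
  have hcongr : #{α : Fin r | r ≤ m + α} = #{α : Fin r | ¬ (α : ℕ) < r - m} :=
    congrArg card (filter_congr fun α _ => by omega)
  omega

instance {r n : ℕ} : DecidableRel (@colorLt r n) := fun _ _ => by
  unfold colorLt; infer_instance

namespace ColoredPerm

variable {r n : ℕ} [NeZero r]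

theorem colorLt_shift_iff (i j : Fin n) (d α : Fin r) :
    colorLt (i, α) (j, d + (if i < j then 1 else 0) + α) ↔
      r ≤ (if i < j then 1 else 0) + d + α := by
  obtain ⟨m, rfl⟩ := Nat.exists_eq_succ_of_ne_zero (NeZero.ne r)
  have := d.isLt
  have := α.isLt
  unfold colorLt
  split_ifs with h
  · simp only [Fin.lt_def, Fin.ext_iff, Fin.val_add_eq_ite (d + 1), Fin.val_add_one, Fin.val_last,
      h, and_true]
    split_ifs <;> omega
  · simp only [Fin.lt_def, Fin.ext_iff, Fin.val_add_eq_ite, h, and_false, or_false, add_zero]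
    split_ifs <;> omega

instance : Fintype (ColoredPerm r n) := by
  unfold ColoredPerm; infer_instance

open Fin.NatCast in
theorem apply_eq_apply_zero (π : ColoredPerm r n) (i : Fin n) (α : Fin r) :
    π.1 (i, α) = ((π.1 (i, 0)).1, (π.1 (i, 0)).2 + α) := by
  have key : ∀ m : ℕ, π.1 (i, (m : Fin r)) = ((π.1 (i, 0)).1, (π.1 (i, 0)).2 + (m : Fin r)) := by
    intro m
    induction m with
    | zero => simp
    | succ m ih => rw [Nat.cast_succ, π.2 (i, m), ih, add_assoc]
  simpa using key α

def ofPerm (σ : Equiv.Perm (Fin n)) (c : Fin n → Fin r) : ColoredPerm r n :=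
  ⟨σ.prodShear fun i => Equiv.addLeft (c i), fun x => by simp [add_assoc]⟩

theorem ofPerm_bijective :
    Function.Bijective fun p : Equiv.Perm (Fin n) × (Fin n → Fin r) => ofPerm p.1 p.2 := by
  constructor
  · rintro ⟨σ, c⟩ ⟨σ', c'⟩ h
    have h' := fun i => congrArg (fun π : ColoredPerm r n => π.1 (i, 0)) h
    simp only [ofPerm, Equiv.prodShear_apply, Equiv.coe_addLeft, add_zero, Prod.mk.injEq] at h'
    exact Prod.ext (Equiv.ext fun i => (h' i).1) (funext fun i => (h' i).2)
  · intro π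
    have hinj : Function.Injective fun i => (π.1 (i, 0)).1 := by
      intro i j hij
      have : π.1 (i, (π.1 (j, 0)).2 - (π.1 (i, 0)).2) = π.1 (j, 0) := by
        rw [apply_eq_apply_zero]
        exact Prod.ext hij (add_sub_cancel _ _)
      exact congrArg Prod.fst (π.1.injective this)
    refine ⟨(Equiv.ofBijective _ hinj.bijective_of_finite, fun i => (π.1 (i, 0)).2), ?_⟩
    exact Subtype.ext (Equiv.ext fun ⟨i, α⟩ => (apply_eq_apply_zero π i α).symm)

noncomputable def equivPermProd : Equiv.Perm (Fin n) × (Fin n → Fin r) ≃ ColoredPerm r n :=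
  ((Equiv.refl _).prodShear fun σ =>
      Equiv.piCongrRight fun i => Equiv.addRight (if i < σ i then 1 else 0)).trans
    (Equiv.ofBijective _ ofPerm_bijective)

theorem cExc_ofPerm (σ : Equiv.Perm (Fin n)) (c : Fin n → Fin r) :
    cExc (ofPerm σ c) = ∑ i, #{α | colorLt (i, α) (σ i, c i + α)} := by
  rw [cExc, Nat.card_eq_fintype_card, Fintype.card_subtype, card_filter, Fintype.sum_prod_type]
  simp only [card_filter]
  rfl

theorem cExc_equivPermProd (p : Equiv.Perm (Fin n) × (Fin n → Fin r)) :
    cExc (equivPermProd p) = permExc p.1 + colorSum p.2 := by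
  obtain ⟨σ, d⟩ := p
  rw [equivPermProd, Equiv.trans_apply, Equiv.ofBijective_apply, Equiv.prodShear_apply]
  rw [cExc_ofPerm, permExc, colorSum, card_filter, ← sum_add_distrib]
  refine sum_congr rfl fun i _ => ?_
  simp only [Equiv.refl_apply, Equiv.piCongrRight_apply, Equiv.coe_addRight, Pi.map_apply]
  rw [filter_congr fun α _ => colorLt_shift_iff i (σ i) (d i) α]
  exact Fin.card_filter_le_add_val (by have := (d i).isLt; split_ifs <;> omega)

end ColoredPerm

/-- Symmetry of the generating function of the excedance number on `G_{r,n}`: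
writing `Σ_{π ∈ G_{r,n}} q^{exc(π)} = Σ_{i=0}^{rn−1} a_i q^i`, one has
`a_i = a_{rn−1−i}` for all `0 ≤ i ≤ rn−1`. -/
theorem exc_generating_symmetric (r n : ℕ) [NeZero r] (hn : 1 ≤ n) (i : ℕ)
    (hi : i ≤ r * n - 1) :
    Nat.card {π : ColoredPerm r n // cExc π = i} =
      Nat.card {π : ColoredPerm r n // cExc π = r * n - 1 - i} := by
  obtain ⟨m, rfl⟩ : ∃ m, n = m + 1 := ⟨n - 1, by omega⟩
  have hfactor : genFun (cExc : ColoredPerm r (m + 1) → ℕ) =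
      genFun (permExc : Equiv.Perm (Fin (m + 1)) → ℕ) *
        genFun (colorSum : (Fin (m + 1) → Fin r) → ℕ) := by
    rw [← genFun_comp_equiv ColoredPerm.equivPermProd, ← genFun_add_prod]
    simp only [ColoredPerm.cExc_equivPermProd]
  have hdeg : m + (r - 1) * (m + 1) = r * (m + 1) - 1 := by
    have := Nat.pos_of_ne_zero (NeZero.ne r)
    rw [Nat.sub_one_mul]
    have := Nat.le_mul_of_pos_left (m + 1) this
    omega
  have hpalindromic : reflect (r * (m + 1) - 1) (genFun (cExc : ColoredPerm r (m + 1) → ℕ)) =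
      genFun (cExc : ColoredPerm r (m + 1) → ℕ) := by
    rw [hfactor, ← hdeg, reflect_mul _ _ (natDegree_genFun_le permExc_le)
      (natDegree_genFun_le fun d => by have := colorSum_rev_add d; omega),
      reflect_genFun_permExc, reflect_genFun_colorSum]
  rw [← coeff_genFun, ← coeff_genFun, ← revAt_le hi, ← coeff_reflect, hpalindromic]
end
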